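/- For every t ∈ (0,1), the following change-of-variables identity holds: ∫_{(1/2)√(−ln t)}^{√(−ln t)} √(e^{−2x²} − t²) dx = (1/2) ∫_0^{arcosh(t^{−3/4})} [t · sinh(w) · tanh(w)] / √(−(1/2)·ln(t² cosh²(w))) dw, where both integrals are finite. (The substitution is e^{−2x²} = t² cosh²(w).) -/

import Mathlib

/-!
Substitute `x = √(−log (t cosh w))`, i.e. `e^{−2x²} = t² cosh² w`. Then
`√(e^{−2x²} − t²) = t sinh w` for `w ≥ 0` and `dx = −tanh w / (2x) dw`, while `w = 0` and
`w = arcosh t^{−3/4}` correspond to `x = √(−log t)` and `x = ½ √(−log t)`. On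
`[0, arcosh t^{−3/4}]` we have `t cosh w ≤ t^{1/4} < 1`, which keeps `x` away from `0`, so every
integrand involved is continuous there.
-/

open MeasureTheory intervalIntegral

/-- The inverse hyperbolic cosine, `arcosh x = log (x + √(x² − 1))`. -/
noncomputable def arcosh (x : ℝ) : ℝ := Real.log (x + Real.sqrt (x ^ 2 - 1))

section WKBSubstitution

open Real Set

@[fun_prop]
theorem Real.continuous_tanh : Continuous tanh := by
  rw [funext tanh_eq_sinh_div_cosh]
  exact continuous_sinh.div continuous_cosh fun x => (cosh_pos x).ne'

variable {t w W : ℝ}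

/-- The branch `x ≥ 0` of the substitution `e^{−2x²} = t² cosh² w`, as a function of `w`. -/
noncomputable def wkbSubst (t w : ℝ) : ℝ := √(-(1 / 2) * log (t ^ 2 * cosh w ^ 2))

theorem wkbSubst_eq (t w : ℝ) : wkbSubst t w = √(-log (t * cosh w)) := by
  rw [wkbSubst, ← mul_pow, log_pow]
  ring_nf

theorem wkbSubst_zero (t : ℝ) : wkbSubst t 0 = √(-log t) := by
  rw [wkbSubst_eq, cosh_zero, mul_one]

theorem wkbSubst_pos (ht : 0 < t) (htw : t * cosh w < 1) : 0 < wkbSubst t w := by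
  rw [wkbSubst_eq, sqrt_pos, neg_pos]
  exact log_neg (by positivity) htw

theorem hasDerivAt_wkbSubst (ht : 0 < t) (htw : t * cosh w < 1) :
    HasDerivAt (wkbSubst t) (-tanh w / (2 * wkbSubst t w)) w := by
  have hlog : HasDerivAt (fun w => -log (t * cosh w)) (-tanh w) w := by
    rw [tanh_eq_sinh_div_cosh, ← mul_div_mul_left _ _ ht.ne']
    exact (((hasDerivAt_cosh w).const_mul t).log (by positivity)).neg
  have hpos : -log (t * cosh w) ≠ 0 := by
    rw [← sq_sqrt (neg_nonneg.2 (log_nonpos (by positivity) htw.le)), ← wkbSubst_eq]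
    exact pow_ne_zero 2 (wkbSubst_pos ht htw).ne'
  simpa only [funext (wkbSubst_eq t), neg_div] using hlog.sqrt hpos

theorem sqrt_exp_sub_sq_wkbSubst (ht : 0 < t) (hw : 0 ≤ w) (htw : t * cosh w ≤ 1) :
    √(exp (-2 * wkbSubst t w ^ 2) - t ^ 2) = t * sinh w := by
  have hexp : exp (-2 * wkbSubst t w ^ 2) = (t * cosh w) ^ 2 := by
    rw [wkbSubst_eq, sq_sqrt (neg_nonneg.2 (log_nonpos (by positivity) htw)), neg_mul_neg,
      mul_comm, exp_mul, exp_log (by positivity), rpow_two]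
  rw [hexp, mul_pow, cosh_sq, mul_add, mul_one, add_sub_cancel_right, ← mul_pow,
    sqrt_sq (mul_nonneg ht.le (sinh_nonneg_iff.2 hw))]

theorem mul_cosh_lt_one_of_mem_uIcc (ht : 0 < t) (hW : 0 ≤ W) (htW : t * cosh W < 1)
    (hw : w ∈ uIcc 0 W) : t * cosh w < 1 := by
  rw [uIcc_of_le hW] at hw
  have : cosh w ≤ cosh W := by
    rw [cosh_le_cosh, abs_of_nonneg hw.1, abs_of_nonneg hW]
    exact hw.2
  nlinarith

theorem continuous_wkbSubst (t : ℝ) : Continuous (wkbSubst t) := by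
  rcases eq_or_ne t 0 with rfl | ht
  · exact (continuous_const (y := (0 : ℝ))).congr fun w => by simp [wkbSubst]
  · unfold wkbSubst
    fun_prop (disch := intro w; positivity)

theorem intervalIntegrable_wkb_integrand (ht : 0 < t) (hW : 0 ≤ W) (htW : t * cosh W < 1) :
    IntervalIntegrable (fun w => t * sinh w * tanh w / wkbSubst t w) volume 0 W := by
  refine ContinuousOn.intervalIntegrable ?_
  refine ((by fun_prop : Continuous fun w => t * sinh w * tanh w).continuousOn).div
    (continuous_wkbSubst t).continuousOn fun w hw => ?_
  exact (wkbSubst_pos ht (mul_cosh_lt_one_of_mem_uIcc ht hW htW hw)).ne'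

theorem integral_sqrt_exp_sub_sq_wkbSubst (ht : 0 < t) (hW : 0 ≤ W) (htW : t * cosh W < 1) :
    ∫ x in wkbSubst t W..wkbSubst t 0, √(exp (-2 * x ^ 2) - t ^ 2)
      = (1 / 2) * ∫ w in 0..W, t * sinh w * tanh w / wkbSubst t w := by
  have hlt : ∀ w ∈ uIcc 0 W, t * cosh w < 1 := fun w => mul_cosh_lt_one_of_mem_uIcc ht hW htW
  have hderiv_cont : ContinuousOn (fun w => -tanh w / (2 * wkbSubst t w)) (uIcc 0 W) :=
    (continuous_tanh.neg.continuousOn).div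
      (continuous_const.mul (continuous_wkbSubst t)).continuousOn
      fun w hw => by have := wkbSubst_pos ht (hlt w hw); positivity
  have hsubst := integral_comp_mul_deriv (fun w hw => hasDerivAt_wkbSubst ht (hlt w hw))
    hderiv_cont (by fun_prop : Continuous fun x => √(exp (-2 * x ^ 2) - t ^ 2))
  rw [integral_symm, ← hsubst, ← intervalIntegral.integral_const_mul,
    ← intervalIntegral.integral_neg]
  refine integral_congr fun w hw => ?_
  simp only [Function.comp_apply]
  rw [sqrt_exp_sub_sq_wkbSubst ht (uIcc_of_le hW ▸ hw).1 (hlt w hw).le]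
  ring

theorem mul_cosh_arcosh_rpow (ht0 : 0 < t) (ht1 : t ≤ 1) :
    t * cosh (_root_.arcosh (t ^ (-(3 : ℝ) / 4))) = t ^ ((1 : ℝ) / 4) := by
  have hy : 1 ≤ t ^ (-(3 : ℝ) / 4) :=
    one_le_rpow_of_pos_of_le_one_of_nonpos ht0 ht1 (by norm_num)
  rw [show _root_.arcosh = Real.arcosh from rfl, cosh_arcosh hy]
  rw [← rpow_one_add' ht0.le (by norm_num)]
  norm_num

theorem wkbSubst_arcosh_rpow (ht0 : 0 < t) (ht1 : t ≤ 1) :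
    wkbSubst t (_root_.arcosh (t ^ (-(3 : ℝ) / 4))) = 1 / 2 * √(-log t) := by
  rw [wkbSubst_eq, mul_cosh_arcosh_rpow ht0 ht1, log_rpow ht0,
    show -(1 / 4 * log t) = (1 / 2) ^ 2 * -log t by ring, sqrt_mul (by positivity),
    sqrt_sq (by norm_num)]

end WKBSubstitution

theorem wkb_change_of_variables (t : ℝ) (ht : t ∈ Set.Ioo (0 : ℝ) 1) :
    IntervalIntegrable (fun x : ℝ => Real.sqrt (Real.exp (-2 * x ^ 2) - t ^ 2))
      volume ((1 / 2) * Real.sqrt (-Real.log t)) (Real.sqrt (-Real.log t)) ∧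
    IntervalIntegrable (fun w : ℝ =>
        t * Real.sinh w * Real.tanh w / Real.sqrt (-(1 / 2) * Real.log (t ^ 2 * Real.cosh w ^ 2)))
      volume 0 (arcosh (t ^ (-(3 : ℝ) / 4))) ∧
    (∫ x in ((1 / 2) * Real.sqrt (-Real.log t))..(Real.sqrt (-Real.log t)),
        Real.sqrt (Real.exp (-2 * x ^ 2) - t ^ 2))
      = (1 / 2) * ∫ w in (0 : ℝ)..(arcosh (t ^ (-(3 : ℝ) / 4))),
          t * Real.sinh w * Real.tanh w / Real.sqrt (-(1 / 2) * Real.log (t ^ 2 * Real.cosh w ^ 2)) := by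
  obtain ⟨ht0, ht1⟩ := ht
  have hW : 0 ≤ arcosh (t ^ (-(3 : ℝ) / 4)) :=
    Real.arcosh_nonneg (Real.one_le_rpow_of_pos_of_le_one_of_nonpos ht0 ht1.le (by norm_num))
  have htW : t * Real.cosh (arcosh (t ^ (-(3 : ℝ) / 4))) < 1 := by
    rw [mul_cosh_arcosh_rpow ht0 ht1.le]
    exact Real.rpow_lt_one ht0.le ht1 (by norm_num)
  refine ⟨(by fun_prop : Continuous _).intervalIntegrable _ _,
    intervalIntegrable_wkb_integrand ht0 hW htW, ?_⟩
  rw [← wkbSubst_arcosh_rpow ht0 ht1.le, ← wkbSubst_zero]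
  exact integral_sqrt_exp_sub_sq_wkbSubst ht0 hW htW
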